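/- Let u₁,u₂,u₃,v₁,v₂ ∈ ℚ with u₂,u₃,v₁ ≠ 0, with i·v₁ ≠ u₂ for all positive integers i, and (i²v₁ − i·u₂)v₂ ≠ u₁u₃ for all positive integers i. If x ∈ ℚ((t⁻¹)) with deg x ≥ 1 solves the Riccati equation (v₁t² + v₂)x' = u₁ + u₂tx + u₃x², then x has the generalized continued fraction expansion x = (1/u₃)·K(βᵢ / αᵢt) with partial numerators βᵢ = (i²v₁ − i u₂)v₂ − u₁u₃ and partial denominators αᵢt where αᵢ = (2i+1)v₁ − u₂, i ≥ 0. -/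

import Mathlib

/-!
Put `Z₀ = u₃ x` and `Z_{k+1} = β_{k+1} / (Z_k - α_k t)`, and write `ord` for the `t⁻¹`-adic order.
If `ord Z ≤ -1` and `(v₁t² + v₂) Z' = -b + s t Z + Z²`, the lowest coefficients of the equation
force `Z = (v₁ - s) t + W` with `ord W = 1`, and `(b + (v₁ - s) v₂) / W` solves the same equation
with `(b, s)` replaced by `(b + (v₁ - s) v₂, s - 2v₁)`. Starting from `(-u₁u₃, u₂)`, step `k` has
`(b, s) = (β_k, u₂ - 2kv₁)`, so the partial quotients are `α_k t`.
The error `u₃ x q_n - p_n` is multiplied by `α_{n+1} t - Z_{n+1}`, of order `1`, at each step, so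
it has order `n + 1`; as `ord q_n = -n`, the order of `u₃ x - p_n / q_n` is `2n + 1`.
-/

open Polynomial

/-- The formal derivative (with respect to `X`) of a formal Laurent series. -/
noncomputable def lsDeriv {F : Type*} [Field F] (f : LaurentSeries F) : LaurentSeries F where
  coeff n := (n + 1 : ℤ) * f.coeff (n + 1)
  isPWO_support' := by
    refine ((HahnSeries.single (-1 : ℤ) (1 : F) * f).isPWO_support).mono ?_
    intro n hn
    have hf : f.coeff (n + 1) ≠ 0 := by
      intro h
      apply hn
      simp [h]
    have hcoeff : (HahnSeries.single (-1 : ℤ) (1 : F) * f).coeff n = f.coeff (n + 1) := by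
      have := HahnSeries.coeff_single_mul_add (r := (1 : F)) (x := f) (b := (-1 : ℤ)) (a := n + 1)
      simpa using this
    simp only [HahnSeries.mem_support, hcoeff]
    exact hf

/-- `t`, as an element of `ℚ((t⁻¹))`: the field of Laurent series in `X = t⁻¹`,
so `t = X⁻¹` is the Hahn series with a single coefficient `1` in degree `-1`. -/
noncomputable def lsT : LaurentSeries ℚ := HahnSeries.single (-1 : ℤ) 1

/-- The formal derivative with respect to `t` on `ℚ((t⁻¹))`: since `X = t⁻¹`,
`d/dt = -X² · d/dX`. -/
noncomputable def tDeriv (f : LaurentSeries ℚ) : LaurentSeries ℚ :=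
  -(HahnSeries.single (2 : ℤ) (1 : ℚ)) * lsDeriv f

namespace LaurentSeries

/-- Not an instance: it would reroute `algebraMap ℚ (LaurentSeries ℚ)` through
`DivisionRing.toRatAlgebra`. -/
theorem charZero {F : Type*} [Field F] [CharZero F] : CharZero (LaurentSeries F) :=
  charZero_of_injective_algebraMap (algebraMap F _).injective

theorem orderTop_inv {F : Type*} [Field F] (f : LaurentSeries F) :
    f⁻¹.orderTop = -f.orderTop := by
  simpa only [HahnSeries.addVal_apply] using (HahnSeries.addVal ℤ F).map_inv (x := f)

theorem orderTop_div {F : Type*} [Field F] (f g : LaurentSeries F) :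
    (f / g).orderTop = f.orderTop - g.orderTop := by
  simpa only [HahnSeries.addVal_apply] using (HahnSeries.addVal ℤ F).map_div (x := f) (y := g)

variable {R : Type*} [CommRing R]

def eulerDeriv (f : LaurentSeries R) : LaurentSeries R where
  coeff n := n * f.coeff n
  isPWO_support' := f.isPWO_support.mono fun n hn hf => hn (by simp [hf])

@[simp]
theorem eulerDeriv_coeff (f : LaurentSeries R) (n : ℤ) :
    (eulerDeriv f).coeff n = n * f.coeff n := rfl

theorem support_eulerDeriv_subset (f : LaurentSeries R) : (eulerDeriv f).support ⊆ f.support :=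
  fun n hn hf => hn (by simp [hf])

/-- On the antidiagonal `i + j = n`, the factor `n` splits as `i + j`. -/
theorem eulerDeriv_mul (f g : LaurentSeries R) :
    eulerDeriv (f * g) = eulerDeriv f * g + f * eulerDeriv g := by
  ext n
  rw [HahnSeries.coeff_add, eulerDeriv_coeff, HahnSeries.coeff_mul,
    HahnSeries.coeff_mul_left' f.isPWO_support (support_eulerDeriv_subset f),
    HahnSeries.coeff_mul_right' g.isPWO_support (support_eulerDeriv_subset g),
    Finset.mul_sum, ← Finset.sum_add_distrib]
  refine Finset.sum_congr rfl fun ij hij => ?_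
  rw [Finset.mem_antidiagonal] at hij
  simp only [eulerDeriv_coeff, ← hij.2.2]
  push_cast
  ring

end LaurentSeries

section

open LaurentSeries HahnSeries

attribute [local instance] LaurentSeries.charZero

theorem ratCast_eq_single (r : ℚ) : (r : LaurentSeries ℚ) = single 0 r := by
  rw [← map_ratCast (C (R := ℚ) (Γ := ℤ)), C_apply, Rat.cast_id]

theorem ratCast_coeff (r : ℚ) (n : ℤ) :
    (r : LaurentSeries ℚ).coeff n = if n = 0 then r else 0 := by
  rw [ratCast_eq_single, coeff_single]
  split_ifs <;> rfl

theorem ratCast_mul_coeff (r : ℚ) (f : LaurentSeries ℚ) (n : ℤ) :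
    ((r : LaurentSeries ℚ) * f).coeff n = r * f.coeff n := by
  rw [ratCast_eq_single, coeff_single_mul, sub_zero]

theorem orderTop_ratCast {r : ℚ} (hr : r ≠ 0) : (r : LaurentSeries ℚ).orderTop = 0 := by
  rw [ratCast_eq_single, orderTop_single hr]
  rfl

theorem orderTop_ratCast_mul {r : ℚ} (hr : r ≠ 0) (f : LaurentSeries ℚ) :
    ((r : LaurentSeries ℚ) * f).orderTop = f.orderTop := by
  rw [orderTop_mul, orderTop_ratCast hr, zero_add]

theorem lsT_mul_coeff (f : LaurentSeries ℚ) (n : ℤ) : (lsT * f).coeff n = f.coeff (n + 1) := by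
  rw [lsT, coeff_single_mul, one_mul, sub_neg_eq_add]

theorem ratCast_mul_lsT (c : ℚ) : (c : LaurentSeries ℚ) * lsT = single (-1) c := by
  rw [ratCast_eq_single, lsT, single_mul_single, zero_add, mul_one]

theorem tDeriv_eq_neg_single_mul_eulerDeriv (f : LaurentSeries ℚ) :
    tDeriv f = -(single 1 1 * eulerDeriv f) := by
  ext n
  simp only [tDeriv, lsDeriv, neg_mul, HahnSeries.coeff_neg, coeff_single_mul, one_mul,
    eulerDeriv_coeff]
  ring_nf

theorem tDeriv_coeff (f : LaurentSeries ℚ) (n : ℤ) :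
    (tDeriv f).coeff n = -((n - 1) * f.coeff (n - 1)) := by
  simp [tDeriv_eq_neg_single_mul_eulerDeriv, coeff_single_mul]

theorem tDeriv_sub (f g : LaurentSeries ℚ) : tDeriv (f - g) = tDeriv f - tDeriv g := by
  ext n
  simp only [tDeriv_coeff, HahnSeries.coeff_sub]
  ring

theorem tDeriv_mul (f g : LaurentSeries ℚ) :
    tDeriv (f * g) = tDeriv f * g + f * tDeriv g := by
  simp only [tDeriv_eq_neg_single_mul_eulerDeriv, eulerDeriv_mul]
  ring

theorem tDeriv_ratCast (r : ℚ) : tDeriv (r : LaurentSeries ℚ) = 0 := by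
  ext n
  rw [tDeriv_coeff, ratCast_coeff]
  by_cases h : n = 1
  · simp [h]
  · simp [sub_eq_zero, h]

theorem tDeriv_one : tDeriv (1 : LaurentSeries ℚ) = 0 := by
  simpa using tDeriv_ratCast 1

theorem tDeriv_lsT : tDeriv lsT = 1 := by
  ext n
  rw [tDeriv_coeff, lsT, ← single_zero_one]
  by_cases h : n = 0 <;> simp [h, sub_eq_iff_eq_add]

theorem tDeriv_inv {f : LaurentSeries ℚ} (hf : f ≠ 0) : tDeriv f⁻¹ = -(f⁻¹ ^ 2 * tDeriv f) := by
  have h := congrArg tDeriv (mul_inv_cancel₀ hf)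
  rw [tDeriv_mul, tDeriv_one] at h
  linear_combination f⁻¹ * h - tDeriv f⁻¹ * inv_mul_cancel₀ hf

/-- The substitution `z = β x` turns the equation `(v₁t² + v₂) x' = -1 + s t x + β x²` of a full
quotient `x` into this monic form with `b = β`. -/
def IsRiccati (v₁ v₂ b s : ℚ) (z : LaurentSeries ℚ) : Prop :=
  ((v₁ : LaurentSeries ℚ) * lsT ^ 2 + v₂) * tDeriv z = -(b : LaurentSeries ℚ) + s * lsT * z + z ^ 2

namespace IsRiccati

variable {v₁ v₂ b s : ℚ} {z : LaurentSeries ℚ}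

theorem coeff_eq (h : IsRiccati v₁ v₂ b s z) (n : ℤ) :
    -(v₁ * ((n + 1) * z.coeff (n + 1))) - v₂ * ((n - 1) * z.coeff (n - 1)) =
      -(if n = 0 then b else 0) + s * z.coeff (n + 1) + (z ^ 2).coeff n := by
  have h := congrArg (HahnSeries.coeff · n) h
  rw [show ((v₁ : LaurentSeries ℚ) * lsT ^ 2 + v₂) * tDeriv z =
      v₁ * (lsT * (lsT * tDeriv z)) + v₂ * tDeriv z by ring,
    show (s : LaurentSeries ℚ) * lsT * z = s * (lsT * z) by ring] at h
  simp only [HahnSeries.coeff_add, HahnSeries.coeff_neg, ratCast_mul_coeff, lsT_mul_coeff,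
    tDeriv_coeff, ratCast_coeff] at h
  rw [← h, add_sub_cancel_right]
  push_cast
  ring

theorem ratCast_mul_of_eq {u₁ u₂ u₃ : ℚ}
    (hz : ((v₁ : LaurentSeries ℚ) * lsT ^ 2 + v₂) * tDeriv z = u₁ + u₂ * lsT * z + u₃ * z ^ 2) :
    IsRiccati v₁ v₂ (-(u₁ * u₃)) u₂ (u₃ * z) := by
  unfold IsRiccati
  rw [tDeriv_mul, tDeriv_ratCast]
  push_cast
  linear_combination (u₃ : LaurentSeries ℚ) * hz

theorem sub_ratCast_mul_lsT (h : IsRiccati v₁ v₂ b s z) :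
    IsRiccati v₁ v₂ (b + (v₁ - s) * v₂) (2 * v₁ - s)
      (z - ((v₁ - s : ℚ) : LaurentSeries ℚ) * lsT) := by
  unfold IsRiccati at h ⊢
  rw [tDeriv_sub, tDeriv_mul, tDeriv_ratCast, tDeriv_lsT]
  push_cast
  linear_combination h

theorem ratCast_mul_inv (h : IsRiccati v₁ v₂ b s z) (hz : z ≠ 0) :
    IsRiccati v₁ v₂ b (-s) ((b : LaurentSeries ℚ) * z⁻¹) := by
  unfold IsRiccati at h ⊢
  rw [tDeriv_mul, tDeriv_ratCast, tDeriv_inv hz]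
  push_cast
  linear_combination (-(b : LaurentSeries ℚ) * z⁻¹ ^ 2) * h
    - (b : LaurentSeries ℚ) * (1 + z⁻¹ * z + s * lsT * z⁻¹) * inv_mul_cancel₀ hz

/-- With `m = order z`, the coefficient of `X^(2m)` reads `z_m² = 0` unless `m = -1`, where it
reads `z₋₁ (v₁ - s - z₋₁) = 0`. -/
theorem zero_le_orderTop_sub (h : IsRiccati v₁ v₂ b s z) (hz : z.orderTop ≤ -1) :
    0 ≤ (z - ((v₁ - s : ℚ) : LaurentSeries ℚ) * lsT).orderTop := by
  have hz0 : z ≠ 0 := by rintro rfl; simp at hz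
  have hm : z.order ≤ -1 := by
    rw [← order_eq_orderTop_of_ne_zero hz0] at hz
    exact WithTop.coe_le_coe.mp hz
  have hlead : z.coeff z.order ≠ 0 := coeff_order_eq_zero.not.mpr hz0
  have hsq : (z ^ 2).coeff (2 * z.order) = z.coeff z.order ^ 2 := by
    rw [sq, sq, two_mul, coeff_mul_order_add_order, leadingCoeff_eq]
  have horder : z.order = -1 := by
    by_contra hne
    have hc := h.coeff_eq (2 * z.order)
    rw [coeff_eq_zero_of_lt_order (by omega : 2 * z.order + 1 < z.order),
      coeff_eq_zero_of_lt_order (by omega : 2 * z.order - 1 < z.order), if_neg (by omega), hsq]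
      at hc
    exact hlead (pow_eq_zero_iff two_ne_zero |>.mp (by linear_combination -hc))
  rw [horder] at hlead hsq
  norm_num at hsq
  have hlead_eq : z.coeff (-1) = v₁ - s := by
    have hc := h.coeff_eq (-2)
    have h3 : z.coeff (-3) = 0 := coeff_eq_zero_of_lt_order (by omega)
    norm_num [hsq, h3] at hc
    exact mul_left_cancel₀ hlead (by linear_combination -hc)
  rw [le_orderTop_iff_forall]
  intro j hj
  rw [HahnSeries.coeff_sub, ratCast_mul_lsT, coeff_single]
  rcases eq_or_ne j (-1) with rfl | hj1
  · rw [if_pos rfl, hlead_eq, sub_self]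
  · rw [if_neg hj1, coeff_eq_zero_of_lt_order (by norm_cast at hj; omega), sub_zero]

/-- The coefficients of `X⁻¹` and `X⁰` read `s z₀ = 0` and `(s + v₁) z₁ = b`. -/
theorem orderTop_eq_one (h : IsRiccati v₁ v₂ b s z) (hs : s ≠ 0) (hb : b ≠ 0)
    (hz : 0 ≤ z.orderTop) : z.orderTop = 1 := by
  have hneg : ∀ n : ℤ, n < 0 → z.coeff n = 0 := fun n hn =>
    coeff_eq_zero_of_lt_orderTop (lt_of_lt_of_le (by exact_mod_cast hn) hz)
  have hsq : ∀ k n : ℤ, k ≤ z.orderTop → n < 2 * k → (z ^ 2).coeff n = 0 := fun k n hk hn =>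
    coeff_eq_zero_of_lt_orderTop <|
      calc (n : WithTop ℤ) < (k + k : ℤ) := by exact_mod_cast (by omega)
        _ ≤ z.orderTop + z.orderTop := by push_cast; exact add_le_add hk hk
        _ = (z ^ 2).orderTop := by rw [sq, orderTop_mul]
  have h0 : z.coeff 0 = 0 := by
    have hc := h.coeff_eq (-1)
    norm_num [hneg (-2) (by norm_num), hsq 0 (-1) hz (by norm_num)] at hc
    exact hc.resolve_left hs
  have hz1 : 1 ≤ z.orderTop := by
    rw [le_orderTop_iff_forall]
    intro j hj
    rcases eq_or_ne j 0 with rfl | hj0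
    · exact h0
    · exact hneg j (by norm_cast at hj; omega)
  have h1 : z.coeff 1 ≠ 0 := by
    intro h1
    have hc := h.coeff_eq 0
    norm_num [hneg (-1) (by norm_num), hsq 1 0 hz1 (by norm_num), h1] at hc
    exact hb hc
  exact le_antisymm (orderTop_le_of_coeff_ne_zero h1) hz1

theorem orderTop_sub_eq_one (h : IsRiccati v₁ v₂ b s z) (hz : z.orderTop ≤ -1)
    (hs : 2 * v₁ - s ≠ 0) (hb : b + (v₁ - s) * v₂ ≠ 0) :
    (z - ((v₁ - s : ℚ) : LaurentSeries ℚ) * lsT).orderTop = 1 :=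
  h.sub_ratCast_mul_lsT.orderTop_eq_one hs hb (h.zero_le_orderTop_sub hz)

theorem next (h : IsRiccati v₁ v₂ b s z)
    (hw : z - ((v₁ - s : ℚ) : LaurentSeries ℚ) * lsT ≠ 0) :
    IsRiccati v₁ v₂ (b + (v₁ - s) * v₂) (s - 2 * v₁)
      (((b + (v₁ - s) * v₂ : ℚ) : LaurentSeries ℚ) *
        (z - ((v₁ - s : ℚ) : LaurentSeries ℚ) * lsT)⁻¹) := by
  simpa only [neg_sub] using h.sub_ratCast_mul_lsT.ratCast_mul_inv hw

theorem exists_fullQuotients {b s : ℕ → ℚ} (hz : IsRiccati v₁ v₂ (b 0) (s 0) z)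
    (hz₁ : z.orderTop ≤ -1) (hs : ∀ k, s (k + 1) = s k - 2 * v₁)
    (hb : ∀ k, b (k + 1) = b k + (v₁ - s k) * v₂)
    (hs₀ : ∀ k, 2 * v₁ - s k ≠ 0) (hb₀ : ∀ k, b (k + 1) ≠ 0) :
    ∃ Z : ℕ → LaurentSeries ℚ, Z 0 = z ∧ ∀ k,
      (Z k - ((v₁ - s k : ℚ) : LaurentSeries ℚ) * lsT).orderTop = 1 ∧
      Z (k + 1) * (Z k - ((v₁ - s k : ℚ) : LaurentSeries ℚ) * lsT) = b (k + 1) := by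
  let Z : ℕ → LaurentSeries ℚ := fun k => Nat.rec z
    (fun k zk => (b (k + 1) : LaurentSeries ℚ) * (zk - ((v₁ - s k : ℚ) : LaurentSeries ℚ) * lsT)⁻¹)
    k
  have hZ_succ : ∀ k, Z (k + 1) =
      (b (k + 1) : LaurentSeries ℚ) * (Z k - ((v₁ - s k : ℚ) : LaurentSeries ℚ) * lsT)⁻¹ :=
    fun k => rfl
  have hZ : ∀ k, IsRiccati v₁ v₂ (b k) (s k) (Z k) ∧ (Z k).orderTop ≤ -1 := by
    intro k
    induction k with
    | zero => exact ⟨hz, hz₁⟩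
    | succ k ih =>
      have hw := ih.1.orderTop_sub_eq_one ih.2 (hs₀ k) (hb k ▸ hb₀ k)
      have hw₀ := orderTop_ne_top.mp (hw ▸ WithTop.one_ne_top)
      refine ⟨?_, ?_⟩
      · rw [hZ_succ, hs, hb]
        exact ih.1.next hw₀
      · rw [hZ_succ, orderTop_ratCast_mul (hb₀ k), LaurentSeries.orderTop_inv, hw]
  have hw k := (hZ k).1.orderTop_sub_eq_one (hZ k).2 (hs₀ k) (hb k ▸ hb₀ k)
  refine ⟨Z, rfl, fun k => ⟨hw k, ?_⟩⟩
  rw [hZ_succ, mul_assoc, inv_mul_cancel₀ (orderTop_ne_top.mp (hw k ▸ WithTop.one_ne_top)),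
    mul_one]

end IsRiccati

theorem convergent_error_succ {R : Type*} [CommRing R] {a β Z p q : ℕ → R}
    (hZ : ∀ k, Z (k + 1) * (Z k - a k) = β (k + 1))
    (hp0 : p 0 = a 0) (hp1 : p 1 = a 0 * a 1 + β 1) (hq0 : q 0 = 1) (hq1 : q 1 = a 1)
    (hp : ∀ n, p (n + 2) = a (n + 2) * p (n + 1) + β (n + 2) * p n)
    (hq : ∀ n, q (n + 2) = a (n + 2) * q (n + 1) + β (n + 2) * q n) (n : ℕ) :
    Z 0 * q (n + 1) - p (n + 1) = (a (n + 1) - Z (n + 1)) * (Z 0 * q n - p n) := by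
  induction n with
  | zero =>
    rw [hp1, hq1, hp0, hq0]
    linear_combination hZ 0
  | succ n ih =>
    rw [hp n, hq n]
    linear_combination Z (n + 2) * ih - (Z 0 * q n - p n) * hZ (n + 1)

theorem orderTop_convergent_denominator {R : Type*} [Ring R] [IsDomain R]
    {a β q : ℕ → LaurentSeries R} (ha : ∀ n, (a n).orderTop = -1)
    (hβ : ∀ n, 0 ≤ (β n).orderTop) (hq0 : q 0 = 1) (hq1 : q 1 = a 1)
    (hq : ∀ n, q (n + 2) = a (n + 2) * q (n + 1) + β (n + 2) * q n) (n : ℕ) :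
    (q n).orderTop = -n := by
  induction n using Nat.strong_induction_on with
  | _ n ih =>
    match n, ih with
    | 0, _ => simp [hq0]
    | 1, _ => simp [hq1, ha]
    | n + 2, ih =>
      rw [hq, orderTop_add_eq_left] <;>
        simp only [orderTop_mul, ha, ih (n + 1) (by omega), ih n (by omega)]
      · simp only [← WithTop.coe_natCast, ← WithTop.coe_one,
          ← WithTop.LinearOrderedAddCommGroup.coe_neg, ← WithTop.coe_add, WithTop.coe_inj]
        omega
      · refine lt_of_lt_of_le ?_ (le_add_of_nonneg_left (hβ _))
        simp only [← WithTop.coe_natCast, ← WithTop.coe_one,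
          ← WithTop.LinearOrderedAddCommGroup.coe_neg, ← WithTop.coe_add, WithTop.coe_lt_coe]
        omega

theorem orderTop_sub_div_convergent {F : Type*} [Field F] {a β Z p q : ℕ → LaurentSeries F}
    (hZ : ∀ k, Z (k + 1) * (Z k - a k) = β (k + 1)) (hZa : ∀ k, (Z k - a k).orderTop = 1)
    (ha : ∀ n, (a n).orderTop = -1) (hβ : ∀ n, 0 ≤ (β n).orderTop)
    (hp0 : p 0 = a 0) (hp1 : p 1 = a 0 * a 1 + β 1) (hq0 : q 0 = 1) (hq1 : q 1 = a 1)
    (hp : ∀ n, p (n + 2) = a (n + 2) * p (n + 1) + β (n + 2) * p n)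
    (hq : ∀ n, q (n + 2) = a (n + 2) * q (n + 1) + β (n + 2) * q n) (n : ℕ) :
    q n ≠ 0 ∧ (Z 0 - p n / q n).orderTop = ((2 * n + 1 : ℤ) : WithTop ℤ) := by
  have herr : ∀ n : ℕ, (Z 0 * q n - p n).orderTop = ((n + 1 : ℤ) : WithTop ℤ) := by
    intro n
    induction n with
    | zero => rw [hq0, hp0, mul_one, hZa]; rfl
    | succ n ih =>
      rw [convergent_error_succ hZ hp0 hp1 hq0 hq1 hp hq, orderTop_mul, ← neg_sub, orderTop_neg,
        hZa, ih, ← WithTop.coe_one, ← WithTop.coe_add, add_comm]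
      push_cast
      rfl
  have hden := orderTop_convergent_denominator ha hβ hq0 hq1 hq n
  have hqn : q n ≠ 0 := by
    rintro h
    rw [h, orderTop_zero, ← WithTop.coe_natCast, ← WithTop.LinearOrderedAddCommGroup.coe_neg]
      at hden
    exact WithTop.top_ne_coe hden
  refine ⟨hqn, ?_⟩
  rw [show Z 0 - p n / q n = (Z 0 * q n - p n) / q n by field_simp, LaurentSeries.orderTop_div,
    herr, hden, ← WithTop.coe_natCast, ← WithTop.LinearOrderedAddCommGroup.coe_neg,
    ← WithTop.LinearOrderedAddCommGroup.coe_sub]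
  congr 1
  ring

end

theorem riccati_continued_fraction_general (u₁ u₂ u₃ v₁ v₂ : ℚ)
    (hu₃ : u₃ ≠ 0)
    (h1 : ∀ i : ℕ, 0 < i → (i : ℚ) * v₁ ≠ u₂)
    (h2 : ∀ i : ℕ, 0 < i → ((i : ℚ) ^ 2 * v₁ - (i : ℚ) * u₂) * v₂ ≠ u₁ * u₃)
    (x : LaurentSeries ℚ) (hdeg : x.order ≤ -1)
    (hx : (algebraMap ℚ (LaurentSeries ℚ) v₁ * lsT ^ 2 + algebraMap ℚ (LaurentSeries ℚ) v₂)
          * tDeriv x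
        = algebraMap ℚ (LaurentSeries ℚ) u₁
          + algebraMap ℚ (LaurentSeries ℚ) u₂ * lsT * x
          + algebraMap ℚ (LaurentSeries ℚ) u₃ * x ^ 2)
    -- the partial quotients `aᵢ = αᵢ t` and partial numerators `βᵢ`:
    (a : ℕ → LaurentSeries ℚ) (β : ℕ → LaurentSeries ℚ)
    (ha : ∀ i : ℕ, a i = algebraMap ℚ (LaurentSeries ℚ) ((2 * i + 1) * v₁ - u₂) * lsT)
    (hβ : ∀ i : ℕ, β i =
      algebraMap ℚ (LaurentSeries ℚ) (((i : ℚ) ^ 2 * v₁ - (i : ℚ) * u₂) * v₂ - u₁ * u₃))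
    -- the convergents `pₙ/qₙ`:
    (p q : ℕ → LaurentSeries ℚ)
    (hp0 : p 0 = a 0) (hp1 : p 1 = a 0 * a 1 + β 1)
    (hq0 : q 0 = 1) (hq1 : q 1 = a 1)
    (hp : ∀ n, p (n + 2) = a (n + 2) * p (n + 1) + β (n + 2) * p n)
    (hq : ∀ n, q (n + 2) = a (n + 2) * q (n + 1) + β (n + 2) * q n) :
    ∀ N : ℤ, ∃ n₀ : ℕ, ∀ n ≥ n₀, q n ≠ 0 ∧
      (N : WithTop ℤ) ≤ (algebraMap ℚ (LaurentSeries ℚ) u₃ * x - p n / q n).orderTop := by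
  have := LaurentSeries.charZero (F := ℚ)
  simp only [eq_ratCast] at hx ha hβ ⊢
  set s : ℕ → ℚ := fun k => u₂ - 2 * k * v₁
  set b : ℕ → ℚ := fun k => ((k : ℚ) ^ 2 * v₁ - k * u₂) * v₂ - u₁ * u₃
  have hR : IsRiccati v₁ v₂ (b 0) (s 0) (u₃ * x) := by
    simpa [b, s] using IsRiccati.ratCast_mul_of_eq hx
  have hx₀ : x ≠ 0 := by rintro rfl; simp at hdeg
  have hord : ((u₃ : LaurentSeries ℚ) * x).orderTop ≤ -1 := by
    rw [orderTop_ratCast_mul hu₃, ← HahnSeries.order_eq_orderTop_of_ne_zero hx₀]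
    exact WithTop.coe_le_coe.mpr hdeg
  have hα : ∀ k, v₁ - s k ≠ 0 := fun k h =>
    h1 (2 * k + 1) (by omega) (by push_cast [s] at h ⊢; linarith)
  obtain ⟨Z, hZ₀, hZ⟩ := hR.exists_fullQuotients hord (fun k => by push_cast [s]; ring)
    (fun k => by push_cast [b, s]; ring)
    (fun k h => h1 (2 * k + 2) (by omega) (by push_cast [s] at h ⊢; linarith))
    (fun k h => h2 (k + 1) (by omega) (by linear_combination h))
  have haZ : ∀ k, a k = ((v₁ - s k : ℚ) : LaurentSeries ℚ) * lsT := fun k => by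
    rw [ha]; congr 2; push_cast [s]; ring
  have ha₁ : ∀ k, (a k).orderTop = -1 := fun k => by
    rw [haZ, ratCast_mul_lsT, HahnSeries.orderTop_single (hα k)]
    rfl
  have hβ₀ : ∀ k, 0 ≤ (β k).orderTop := fun k => by
    rw [hβ, ratCast_eq_single]
    exact HahnSeries.orderTop_single_le
  intro N
  refine ⟨N.toNat, fun n hn => ?_⟩
  obtain ⟨hqn, herr⟩ := orderTop_sub_div_convergent (fun k => by rw [haZ, hβ]; exact (hZ k).2)
    (fun k => by rw [haZ]; exact (hZ k).1) ha₁ hβ₀ hp0 hp1 hq0 hq1 hp hq n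
  rw [hZ₀] at herr
  exact ⟨hqn, herr ▸ by exact_mod_cast (by omega : N ≤ 2 * n + 1)⟩

/-- Let `u₁,u₂,u₃,v₁,v₂ ∈ ℚ` with `u₂,u₃,v₁ ≠ 0`, with `i·v₁ ≠ u₂` for all positive
integers `i`, and `(i²v₁ − i·u₂)v₂ ≠ u₁u₃` for all positive integers `i`.  If
`x ∈ ℚ((t⁻¹))` with `deg x ≥ 1` solves the Riccati equation
`(v₁t² + v₂)x' = u₁ + u₂tx + u₃x²`, then `x` has the generalized continued fraction
expansion `x = (1/u₃)·K(βᵢ / αᵢt)` with partial numerators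
`βᵢ = (i²v₁ − i u₂)v₂ − u₁u₃` and partial denominators `αᵢ·t`, `αᵢ = (2i+1)v₁ − u₂`:
the convergents `pₙ/qₙ`, defined by the standard recursions, converge to `u₃·x` in the
`t⁻¹`-adic sense, i.e. the order of `u₃·x − pₙ/qₙ` tends to `⊤`. -/
theorem riccati_continued_fraction (u₁ u₂ u₃ v₁ v₂ : ℚ)
    (hu₂ : u₂ ≠ 0) (hu₃ : u₃ ≠ 0) (hv₁ : v₁ ≠ 0)
    (h1 : ∀ i : ℕ, 0 < i → (i : ℚ) * v₁ ≠ u₂)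
    (h2 : ∀ i : ℕ, 0 < i → ((i : ℚ) ^ 2 * v₁ - (i : ℚ) * u₂) * v₂ ≠ u₁ * u₃)
    (x : LaurentSeries ℚ) (hdeg : x.order ≤ -1)
    (hx : (algebraMap ℚ (LaurentSeries ℚ) v₁ * lsT ^ 2 + algebraMap ℚ (LaurentSeries ℚ) v₂)
          * tDeriv x
        = algebraMap ℚ (LaurentSeries ℚ) u₁
          + algebraMap ℚ (LaurentSeries ℚ) u₂ * lsT * x
          + algebraMap ℚ (LaurentSeries ℚ) u₃ * x ^ 2)
    -- the partial quotients `aᵢ = αᵢ t` and partial numerators `βᵢ`: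
    (a : ℕ → LaurentSeries ℚ) (β : ℕ → LaurentSeries ℚ)
    (ha : ∀ i : ℕ, a i = algebraMap ℚ (LaurentSeries ℚ) ((2 * i + 1) * v₁ - u₂) * lsT)
    (hβ : ∀ i : ℕ, β i =
      algebraMap ℚ (LaurentSeries ℚ) (((i : ℚ) ^ 2 * v₁ - (i : ℚ) * u₂) * v₂ - u₁ * u₃))
    -- the convergents `pₙ/qₙ`:
    (p q : ℕ → LaurentSeries ℚ)
    (hp0 : p 0 = a 0) (hp1 : p 1 = a 0 * a 1 + β 1)
    (hq0 : q 0 = 1) (hq1 : q 1 = a 1)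
    (hp : ∀ n, p (n + 2) = a (n + 2) * p (n + 1) + β (n + 2) * p n)
    (hq : ∀ n, q (n + 2) = a (n + 2) * q (n + 1) + β (n + 2) * q n) :
    ∀ N : ℤ, ∃ n₀ : ℕ, ∀ n ≥ n₀, q n ≠ 0 ∧
      (N : WithTop ℤ) ≤ (algebraMap ℚ (LaurentSeries ℚ) u₃ * x - p n / q n).orderTop :=
  riccati_continued_fraction_general u₁ u₂ u₃ v₁ v₂ hu₃ h1 h2 x hdeg hx a β ha hβ p q hp0 hp1 hq0
    hq1 hp hq
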